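/- Let σ be a page request sequence processed by the LRU policy with cache size k ≥ 1 starting from an empty cache. Suppose page p is requested at time s (so p belongs to LRU's cache immediately after time s) and that LRU evicts p at a fault occurring at a time t > s, with no request for p in between. Then among the requests σ_{s+1}, …, σ_t there are at least k distinct pages, all different from p. -/

import Mathlib

/-!
Everything LRU keeps ahead of `p` in its recency list has been requested since the last
request for `p`: each step moves the requested page to the front and otherwise only erases
or truncates, which never puts a page ahead of `p`. When a fault on `σ t` evicts `p`, the
cache is full and `p` sits at its end, so the `k - 1` pages ahead of it together with the
new page `σ t` are `k` distinct pages requested in `(s, t]`, none equal to `p`.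
-/

/-- One step of the LRU policy with cache size `k`.  The cache is maintained as a list
of (distinct) pages ordered by recency of their most recent request (most recent first);
on a request for `p`, page `p` is moved to the front, and if the cache overflows, the
page whose most recent request lies furthest in the past (the last list entry) is evicted. -/
def lruStep (k : ℕ) (L : List ℕ) (p : ℕ) : List ℕ := (p :: L.erase p).take k

/-- The LRU cache (with cache size `k`, starting from an empty cache) just before the
request at (0-based) time `t` of the request sequence `σ`. -/
def lruCache (k : ℕ) (σ : ℕ → ℕ) : ℕ → List ℕ
  | 0 => []
  | t + 1 => lruStep k (lruCache k σ t) (σ t)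

theorem lruStep_nodup {L : List ℕ} (hL : L.Nodup) (k q : ℕ) : (lruStep k L q).Nodup :=
  (List.nodup_cons.2 ⟨fun h => ((hL.mem_erase_iff).1 h).1 rfl, hL.erase q⟩).sublist
    (List.take_sublist _ _)

theorem lruCache_nodup (k : ℕ) (σ : ℕ → ℕ) : ∀ t, (lruCache k σ t).Nodup
  | 0 => List.nodup_nil
  | t + 1 => lruStep_nodup (lruCache_nodup k σ t) k (σ t)

theorem eq_or_pair_sublist_erase_of_pair_sublist_lruStep {k q x p : ℕ} {L : List ℕ}
    (h : [x, p].Sublist (lruStep k L q)) : x = q ∨ [x, p].Sublist (L.erase q) := by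
  rcases List.sublist_cons_iff.1 (h.trans (List.take_sublist _ _)) with h | ⟨r, hr, -⟩
  · exact Or.inr h
  · exact Or.inl (List.cons.inj hr).1

theorem exists_request_of_pair_sublist_lruCache {k : ℕ} {σ : ℕ → ℕ} {p s x : ℕ}
    (hs : σ s = p) {u : ℕ} (hsu : s < u) (hbetween : ∀ v, s < v → v < u → σ v ≠ p)
    (h : [x, p].Sublist (lruCache k σ u)) : ∃ v, s < v ∧ v < u ∧ σ v = x := by
  induction u, hsu using Nat.le_induction with
  | base =>
    -- right after time `s`, the page `p` is at the front of the cache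
    exfalso
    rcases eq_or_pair_sublist_erase_of_pair_sublist_lruStep h with rfl | h
    · exact List.nodup_iff_sublist.1 (lruCache_nodup k σ (s + 1)) p (hs ▸ h)
    · rw [hs] at h
      exact (((lruCache_nodup k σ s).mem_erase_iff).1 (h.subset (by simp))).1 rfl
  | succ u hsu ih =>
    rcases eq_or_pair_sublist_erase_of_pair_sublist_lruStep h with rfl | h
    · exact ⟨u, hsu, u.lt_succ_self, rfl⟩
    · obtain ⟨v, hsv, hvu, rfl⟩ :=
        ih (fun v hsv hvu => hbetween v hsv (hvu.trans u.lt_succ_self))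
          (h.trans (List.erase_sublist ..))
      exact ⟨v, hsv, hvu.trans u.lt_succ_self, rfl⟩

theorem le_length_of_notMem_take_append_cons {k p : ℕ} {A B : List ℕ}
    (h : p ∉ (A ++ p :: B).take k) : k ≤ A.length := by
  by_contra! hk
  apply h
  rw [List.take_append, show k - A.length = (k - A.length - 1) + 1 by omega, List.take_succ_cons]
  exact List.mem_append_right _ List.mem_cons_self

theorem le_card_of_notMem_lruStep {k p q : ℕ} {L : List ℕ} (hL : L.Nodup) (hp : p ∈ L)
    (hq : q ∉ L) (hout : p ∉ lruStep k L q) {S : Finset ℕ} (hqS : q ∈ S)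
    (hS : ∀ x, [x, p].Sublist L → x ∈ S) : k ≤ S.card := by
  obtain ⟨A, B, rfl⟩ := List.append_of_mem hp
  have hlen : k ≤ (q :: A).length := by
    refine le_length_of_notMem_take_append_cons (p := p) (B := B) ?_
    simpa [lruStep, List.erase_of_not_mem hq] using hout
  have hqA : q ∉ A := fun h => hq (List.mem_append_left _ h)
  have hsub : insert q A.toFinset ⊆ S := by
    refine Finset.insert_subset hqS fun x hx => hS x ?_
    simpa using (List.singleton_sublist.2 (List.mem_toFinset.1 hx)).append
      (List.singleton_sublist.2 (List.mem_cons_self (l := B)))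
  calc k ≤ A.length + 1 := hlen
    _ = (insert q A.toFinset).card := by
      rw [Finset.card_insert_of_notMem (by simpa using hqA),
        List.toFinset_card_of_nodup (List.nodup_append.1 hL).1]
    _ ≤ S.card := Finset.card_le_card hsub

theorem stmt5_general (k : ℕ) (σ : ℕ → ℕ) (p s t : ℕ)
    (hs : σ s = p) (hst : s < t)
    (hfault : σ t ∉ lruCache k σ t)
    (hin : p ∈ lruCache k σ t) (hout : p ∉ lruCache k σ (t + 1))
    (hbetween : ∀ u, s < u → u < t → σ u ≠ p) :
    k ≤ (((Finset.Icc (s + 1) t).image σ).erase p).card := by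
  have hσt : σ t ≠ p := fun h => hfault (h ▸ hin)
  refine le_card_of_notMem_lruStep (lruCache_nodup k σ t) hin hfault hout
    (Finset.mem_erase.2 ⟨hσt, Finset.mem_image_of_mem σ (Finset.mem_Icc.2 ⟨hst, le_rfl⟩)⟩)
    fun x hx => ?_
  obtain ⟨v, hsv, hvt, rfl⟩ := exists_request_of_pair_sublist_lruCache hs hst hbetween hx
  exact Finset.mem_erase.2 ⟨hbetween v hsv hvt,
    Finset.mem_image_of_mem σ (Finset.mem_Icc.2 ⟨hsv, hvt.le⟩)⟩

/-- Suppose page `p` is requested at time `s` (so `p` is in LRU's cache immediately after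
time `s`), LRU (cache size `k ≥ 1`, empty initial cache) evicts `p` at a fault occurring
at time `t > s`, and `p` is not requested at any time strictly between `s` and `t`.
Then among the requests `σ (s+1), …, σ t` there are at least `k` distinct pages, all
different from `p`.  (Times are 0-based: the request at time `u` is `σ u`, it is a fault
when `σ u ∉ lruCache k σ u`, and the cache immediately after time `u` is
`lruCache k σ (u+1)`.) -/
theorem stmt5 (k : ℕ) (hk : 1 ≤ k) (σ : ℕ → ℕ) (p s t : ℕ)
    (hs : σ s = p) (hst : s < t)
    (hfault : σ t ∉ lruCache k σ t)
    (hin : p ∈ lruCache k σ t) (hout : p ∉ lruCache k σ (t + 1))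
    (hbetween : ∀ u, s < u → u < t → σ u ≠ p) :
    k ≤ (((Finset.Icc (s + 1) t).image σ).erase p).card :=
  stmt5_general k σ p s t hs hst hfault hin hout hbetween
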